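/- Let G be a directed graph over F_2 and x_k a vertex of G that lies on no directed cycle of G. Let G_k be the induced subgraph on V(G)\{x_k}. If minrank_2(G_k) = m − 1, then minrank_2(G) = m. (Equivalently: if x_k lies on no directed cycle, then minrank_2(G) = minrank_2(G_k) + 1.) -/

import Mathlib

/-- A matrix `A` fits a directed graph with edge relation `E` if it has 1's on the
diagonal and 0's at off-diagonal non-edges. -/
def Fits {V : Type*} {F : Type*} [Field F] (E : V → V → Prop)
    (A : Matrix V V F) : Prop :=
  (∀ v, A v v = 1) ∧ ∀ u v, u ≠ v → ¬ E u v → A u v = 0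

/-- The minrank over `F` of the directed graph with edge relation `E`. -/
noncomputable def minrank (F : Type*) [Field F] {V : Type*} [Fintype V]
    (E : V → V → Prop) : ℕ :=
  sInf {r | ∃ A : Matrix V V F, Fits E A ∧ A.rank = r}

/-- Vertex `k` lies on a directed cycle (on at least two distinct vertices). -/
def OnCycle {V : Type*} (E : V → V → Prop) (k : V) : Prop :=
  ∃ (n : ℕ) (f : Fin (n + 2) → V), Function.Injective f ∧ f 0 = k ∧
    (∀ i : Fin (n + 1), E (f i.castSucc) (f i.succ)) ∧ E (f (Fin.last (n + 1))) (f 0)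

/-!
If `k` lies on no cycle, the set `S` of vertices `v ≠ k` reachable from `k` is closed under
out-edges, so every fitting matrix `A` vanishes on the block `S × Sᶜ`. For such a
block-triangular matrix the rank is at least the sum of the ranks of the diagonal blocks, so
deleting the other off-diagonal block `Sᶜ × S` keeps `A` fitting without increasing its rank.
Afterwards row `k` is the unit vector, so deleting `k` lowers the rank by at least one.
Conversely, a fitting matrix of `G - k` extended by a diagonal `1` at `k` fits `G`.
-/

open Matrix Module Relation

namespace Matrix
variable {F : Type*} [Field F]

/-- Frobenius' rank inequality `rk(RM) + rk(MC) ≤ rk M + rk(RMC)` in the case `RMC = 0`. -/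
theorem rank_mul_add_rank_mul_le_of_mul_mul_eq_zero {a b c d : Type*} [Fintype a] [Fintype b]
    [Fintype d] {R : Matrix c a F} {M : Matrix a b F} {C : Matrix b d F} (h : R * M * C = 0) :
    (R * M).rank + (M * C).rank ≤ M.rank := by
  set W := LinearMap.range M.mulVecLin
  have hMC : ∀ x, (M * C).mulVecLin x ∈ W := fun x => ⟨C *ᵥ x, by simp [mulVec_mulVec]⟩
  let π := R.mulVecLin.domRestrict W
  let g := (M * C).mulVecLin.codRestrict W hMC
  have hπg : π ∘ₗ g = 0 := by
    ext x : 1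
    simp [π, g, mulVec_mulVec, ← Matrix.mul_assoc, h]
  have hRM : (R * M).rank = finrank F (LinearMap.range π) := by
    rw [rank, mulVecLin_mul, LinearMap.range_comp, LinearMap.range_domRestrict]
  have hMC_le : (M * C).rank ≤ finrank F (LinearMap.range g) := by
    rw [rank, ← (M * C).mulVecLin.subtype_comp_codRestrict W hMC, LinearMap.range_comp]
    exact Submodule.finrank_map_le _ _
  have hnullity := π.finrank_range_add_finrank_ker
  have hg_le_ker := Submodule.finrank_mono (LinearMap.range_le_ker_iff.mpr hπg)
  change _ ≤ finrank F W
  omega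

theorem rank_le_rank_rows_add_rank_rows_compl {m n : Type*} [Fintype m] [Fintype n]
    (A : Matrix m n F) (p : m → Prop) [DecidablePred p] :
    A.rank ≤ (A.submatrix (Subtype.val : {i // p i} → m) id).rank
      + (A.submatrix (Subtype.val : {i // ¬ p i} → m) id).rank := by
  simp only [rank_eq_finrank_span_row]
  refine (Submodule.finrank_mono ?_).trans (Submodule.finrank_add_le_finrank_add_finrank _ _)
  rw [← Submodule.span_union]
  refine Submodule.span_mono ?_
  rintro _ ⟨i, rfl⟩
  by_cases hi : p i
  · exact Or.inl ⟨⟨i, hi⟩, rfl⟩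
  · exact Or.inr ⟨⟨i, hi⟩, rfl⟩

theorem rank_le_rank_cols_add_rank_cols_compl {m n : Type*} [Fintype m] [Fintype n]
    (A : Matrix m n F) (q : n → Prop) [DecidablePred q] :
    A.rank ≤ (A.submatrix id (Subtype.val : {j // q j} → n)).rank
      + (A.submatrix id (Subtype.val : {j // ¬ q j} → n)).rank := by
  have := rank_le_rank_rows_add_rank_rows_compl Aᵀ q
  rwa [rank_transpose, ← transpose_submatrix, rank_transpose, ← transpose_submatrix,
    rank_transpose] at this

variable {V : Type*} [Fintype V]

theorem rank_le_rank_toSquareBlockProp_add_rank (A : Matrix V V F) (p : V → Prop) [DecidablePred p]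
    (h₁ : ∀ u v, p u → ¬ p v → A u v = 0) (h₂ : ∀ u v, ¬ p u → p v → A u v = 0) :
    A.rank ≤ (A.toSquareBlockProp p).rank + (A.toSquareBlockProp (¬ p ·)).rank := by
  have hz₁ : A.submatrix (Subtype.val : {v // p v} → V) (Subtype.val : {v // ¬ p v} → V) = 0 := by
    ext u v
    exact h₁ u v u.2 v.2
  have hz₂ : A.submatrix (Subtype.val : {v // ¬ p v} → V) (Subtype.val : {v // p v} → V) = 0 := by
    ext u v
    exact h₂ u v u.2 v.2
  have hrows := rank_le_rank_rows_add_rank_rows_compl A p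
  have hcols₁ := rank_le_rank_cols_add_rank_cols_compl
    (A.submatrix (Subtype.val : {v // p v} → V) id) p
  have hcols₂ := rank_le_rank_cols_add_rank_cols_compl
    (A.submatrix (Subtype.val : {v // ¬ p v} → V) id) p
  simp only [submatrix_submatrix, Function.id_comp, Function.comp_id, hz₁, hz₂, rank_zero,
    add_zero, zero_add] at hcols₁ hcols₂
  exact hrows.trans (add_le_add hcols₁ hcols₂)

theorem rank_toSquareBlockProp_add_rank_le (A : Matrix V V F) (p : V → Prop) [DecidablePred p]
    (h : ∀ u v, p u → ¬ p v → A u v = 0) :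
    (A.toSquareBlockProp p).rank + (A.toSquareBlockProp (¬ p ·)).rank ≤ A.rank := by
  classical
  let R : Matrix {v // p v} V F := (1 : Matrix V V F).submatrix Subtype.val id
  let C : Matrix V {v // ¬ p v} F := (1 : Matrix V V F).submatrix id Subtype.val
  have hR : R * A = A.submatrix Subtype.val id := by
    simpa using one_submatrix_mul Subtype.val (Equiv.refl V) A
  have hC : ∀ {m : Type _} (B : Matrix m V F), B * C = B.submatrix id Subtype.val := fun B => by
    simpa using mul_submatrix_one (Equiv.refl V) Subtype.val B
  have hRAC : R * A * C = 0 := by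
    rw [hR, hC]
    ext u v
    exact h u v u.2 v.2
  calc _ ≤ (R * A).rank + (A * C).rank := by
        rw [hR, hC]
        exact add_le_add (rank_submatrix_le (A.submatrix Subtype.val id) id Subtype.val)
          (rank_submatrix_le (A.submatrix id Subtype.val) Subtype.val id)
    _ ≤ A.rank := rank_mul_add_rank_mul_le_of_mul_mul_eq_zero hRAC

theorem rank_toSquareBlockProp_add_rank_le' (A : Matrix V V F) (p : V → Prop) [DecidablePred p]
    (h : ∀ u v, ¬ p u → p v → A u v = 0) :
    (A.toSquareBlockProp p).rank + (A.toSquareBlockProp (¬ p ·)).rank ≤ A.rank := by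
  calc _ = ((A.toSquareBlockProp p)ᵀ).rank + ((A.toSquareBlockProp (¬ p ·))ᵀ).rank := by
        rw [rank_transpose, rank_transpose]
    _ ≤ Aᵀ.rank := rank_toSquareBlockProp_add_rank_le Aᵀ p fun u v hu hv => h v u hv hu
    _ = A.rank := rank_transpose A

def blockDiagPart {V α : Type*} [Zero α] (A : Matrix V V α) (p : V → Prop) [DecidablePred p] :
    Matrix V V α :=
  of fun u v => if (p u ↔ p v) then A u v else 0

@[simp]
theorem blockDiagPart_apply {V α : Type*} [Zero α] (A : Matrix V V α) (p : V → Prop)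
    [DecidablePred p] (u v : V) : A.blockDiagPart p u v = if (p u ↔ p v) then A u v else 0 :=
  rfl

theorem rank_blockDiagPart_le (A : Matrix V V F) (p : V → Prop) [DecidablePred p]
    (h : ∀ u v, p u → ¬ p v → A u v = 0) : (A.blockDiagPart p).rank ≤ A.rank := by
  have hp : (A.blockDiagPart p).toSquareBlockProp p = A.toSquareBlockProp p := by
    ext u v
    exact if_pos (iff_of_true u.2 v.2)
  have hnp : (A.blockDiagPart p).toSquareBlockProp (¬ p ·) = A.toSquareBlockProp (¬ p ·) := by
    ext u v
    exact if_pos (iff_of_false u.2 v.2)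
  calc (A.blockDiagPart p).rank
      ≤ ((A.blockDiagPart p).toSquareBlockProp p).rank
        + ((A.blockDiagPart p).toSquareBlockProp (¬ p ·)).rank :=
      rank_le_rank_toSquareBlockProp_add_rank _ p
        (fun u v hu hv => if_neg fun huv => hv (huv.mp hu))
        (fun u v hu hv => if_neg fun huv => hu (huv.mpr hv))
    _ = (A.toSquareBlockProp p).rank + (A.toSquareBlockProp (¬ p ·)).rank := by rw [hp, hnp]
    _ ≤ A.rank := rank_toSquareBlockProp_add_rank_le A p h

end Matrix

section Fits
variable {F : Type*} [Field F] {V : Type*} {E : V → V → Prop} {A : Matrix V V F}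

theorem Fits.toSquareBlockProp (hA : Fits E A) (p : V → Prop) :
    Fits (fun u v : {v // p v} => E u v) (A.toSquareBlockProp p) :=
  ⟨fun v => hA.1 v, fun u v huv hE => hA.2 u v (Subtype.coe_injective.ne huv) hE⟩

theorem Fits.blockDiagPart (hA : Fits E A) (p : V → Prop) [DecidablePred p] :
    Fits E (A.blockDiagPart p) :=
  ⟨fun v => by simp [hA.1 v], fun u v huv hE => by simp [hA.2 u v huv hE]⟩

theorem minrank_le_rank [Fintype V] (hA : Fits E A) : minrank F E ≤ A.rank :=
  Nat.sInf_le ⟨A, hA, rfl⟩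

end Fits

section Minrank
variable (F : Type*) [Field F] {V : Type*} [Fintype V] (E : V → V → Prop)

theorem exists_fits_rank_eq_minrank : ∃ A : Matrix V V F, Fits E A ∧ A.rank = minrank F E := by
  classical
  exact Nat.sInf_mem (s := {r | ∃ A : Matrix V V F, Fits E A ∧ A.rank = r})
    ⟨_, 1, ⟨fun v => one_apply_eq v, fun _ _ h _ => one_apply_ne h⟩, rfl⟩

theorem minrank_le_minrank_induce_add_card (p : V → Prop) [DecidablePred p] :
    minrank F E ≤ minrank F (fun u v : {v // p v} => E u v) + Fintype.card {v // ¬ p v} := by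
  classical
  obtain ⟨B, hB, hBrank⟩ := exists_fits_rank_eq_minrank F (fun u v : {v // p v} => E u v)
  let A : Matrix V V F := of fun u v =>
    if h : p u ∧ p v then B ⟨u, h.1⟩ ⟨v, h.2⟩ else (1 : Matrix V V F) u v
  have hA : Fits E A := by
    refine ⟨fun v => ?_, fun u v huv hE => ?_⟩
    · by_cases hv : p v
      · simpa [A, hv] using hB.1 ⟨v, hv⟩
      · simp [A, hv]
    · by_cases h : p u ∧ p v
      · simpa [A, h] using hB.2 ⟨u, h.1⟩ ⟨v, h.2⟩ (by simpa using huv) hE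
      · simp [A, h, huv]
  have hAp : A.toSquareBlockProp p = B := by
    ext u v
    simp [A, toSquareBlockProp_def, u.2, v.2]
  have hAnp : A.toSquareBlockProp (¬ p ·) = 1 := by
    ext u v
    simp [A, toSquareBlockProp_def, u.2, one_apply, Subtype.ext_iff]
  calc minrank F E ≤ A.rank := minrank_le_rank hA
    _ ≤ (A.toSquareBlockProp p).rank + (A.toSquareBlockProp (¬ p ·)).rank :=
      rank_le_rank_toSquareBlockProp_add_rank A p
        (fun u v hu hv => by simp [A, hv, one_apply, show u ≠ v by rintro rfl; exact hv hu])
        (fun u v hu hv => by simp [A, hu, one_apply, show u ≠ v by rintro rfl; exact hu hv])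
    _ = _ := by rw [hAp, hAnp, rank_one, hBrank]

end Minrank

section Cycle
variable {V : Type*} {E : V → V → Prop}

theorem exists_nodup_isChain_of_reflTransGen {a b : V} (h : ReflTransGen E a b) :
    ∃ l, (a :: l).IsChain E ∧ (a :: l).Nodup ∧ (a :: l).getLast? = some b := by
  induction h using ReflTransGen.head_induction_on with
  | refl => exact ⟨[], by simp, by simp, rfl⟩
  | @head a c hac _ ih =>
    obtain ⟨l, hc, hnd, hlast⟩ := ih
    by_cases ha : a ∈ c :: l
    · obtain ⟨s, t, hst⟩ := List.append_of_mem ha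
      rw [hst] at hc hnd hlast
      exact ⟨t, hc.right_of_append, hnd.of_append_right, by rw [← hlast, List.getLast?_append_cons]⟩
    · exact ⟨c :: l, List.isChain_cons_cons.mpr ⟨hac, hc⟩, List.nodup_cons.mpr ⟨ha, hnd⟩,
        by simpa using hlast⟩

theorem onCycle_of_isChain_of_nodup {k : V} {l : List V} (hc : (k :: l).IsChain E)
    (hnd : (k :: l).Nodup) (hl : l ≠ []) {u : V} (hu : (k :: l).getLast? = some u) (hback : E u k) :
    OnCycle E k := by
  obtain ⟨n, hn⟩ : ∃ n, l.length = n + 1 :=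
    Nat.exists_eq_succ_of_ne_zero (List.length_pos_iff.mpr hl).ne'
  refine ⟨n, fun i => (k :: l)[i.1]'(by simp; omega), fun i j hij => ?_, rfl, fun i => ?_, ?_⟩
  · exact Fin.ext ((List.Nodup.getElem_inj_iff hnd).mp hij)
  · exact hc.getElem i (by simp; omega)
  · simp [List.getLast?_eq_getElem?, hn] at hu
    simpa [hu] using hback

theorem eq_of_reflTransGen_of_not_onCycle {k u : V} (hk : ¬ OnCycle E k)
    (hku : ReflTransGen E k u) (huk : E u k) : u = k := by
  by_contra hne
  obtain ⟨l, hc, hnd, hlast⟩ := exists_nodup_isChain_of_reflTransGen hku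
  refine hk (onCycle_of_isChain_of_nodup hc hnd ?_ hlast huk)
  rintro rfl
  exact hne (by simpa using hlast.symm)

end Cycle

section LowerBound
variable {F : Type*} [Field F] {V : Type*} [Fintype V] [DecidableEq V]

theorem minrank_induce_ne_add_one_le_of_not_onCycle {E : V → V → Prop} {k : V}
    (hk : ¬ OnCycle E k) :
    minrank F (fun u v : {v // v ≠ k} => E u v) + 1 ≤ minrank F E := by
  classical
  obtain ⟨A, hA, hArank⟩ := exists_fits_rank_eq_minrank F E
  -- `S` is closed under out-edges because `k` lies on no cycle.
  let S : V → Prop := fun v => v ≠ k ∧ ReflTransGen E k v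
  have hS : ∀ u v, S u → ¬ S v → A u v = 0 := by
    intro u v hu hv
    refine hA.2 u v (fun huv => hv (huv ▸ hu)) fun huv => hv ⟨?_, hu.2.tail huv⟩
    rintro rfl
    exact hu.1 (eq_of_reflTransGen_of_not_onCycle hk hu.2 huv)
  set A' := A.blockDiagPart S
  have hrow : ∀ u v, ¬ u ≠ k → v ≠ k → A' u v = 0 := by
    rintro u v hu hv
    obtain rfl := not_not.mp hu
    by_cases hSv : S v
    · exact if_neg fun h => (h.mpr hSv).1 rfl
    · exact (if_pos (iff_of_false (fun h => h.1 rfl) hSv)).trans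
        (hA.2 u v (Ne.symm hv) fun hE => hSv ⟨hv, ReflTransGen.single hE⟩)
  have hk_block : A'.toSquareBlockProp (¬ · ≠ k) = 1 := by
    ext ⟨u, hu⟩ ⟨v, hv⟩
    obtain rfl := (not_not.mp hu).trans (not_not.mp hv).symm
    rw [one_apply_eq]
    exact (hA.blockDiagPart S).1 u
  have hsplit := rank_toSquareBlockProp_add_rank_le' A' (· ≠ k) hrow
  rw [hk_block, rank_one, Fintype.card_eq_one_iff.mpr
    ⟨⟨k, not_not.mpr rfl⟩, fun v => Subtype.ext (not_not.mp v.2)⟩] at hsplit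
  calc minrank F (fun u v : {v // v ≠ k} => E u v) + 1
      ≤ (A'.toSquareBlockProp (· ≠ k)).rank + 1 :=
        Nat.add_le_add_right (minrank_le_rank ((hA.blockDiagPart S).toSquareBlockProp _)) 1
    _ ≤ A'.rank := hsplit
    _ ≤ A.rank := rank_blockDiagPart_le A S hS
    _ = minrank F E := hArank

end LowerBound

theorem minrank_delete_acyclic_vertex {K : ℕ} (E : Fin K → Fin K → Prop) (k : Fin K)
    (hk : ¬ OnCycle E k) :
    minrank (ZMod 2) E
      = minrank (ZMod 2) (fun u v : {v : Fin K // v ≠ k} => E u.1 v.1) + 1 := by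
  refine le_antisymm ?_ (minrank_induce_ne_add_one_le_of_not_onCycle hk)
  simpa using minrank_le_minrank_induce_add_card (ZMod 2) E (· ≠ k)
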